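/- arXiv:2012.01014 — 4 statements merged into one kernel-verified Lean document; each statement's English description precedes it below -/
import Mathlib

section
/- Let (φ_i)_{i ∈ ι} be a family of nonzero eigenvectors of A (A φ_i = λ_i • φ_i with λ_i real) that is orthogonal in H (⟨φ_i, φ_j⟩ = 0 for i ≠ j) and complete in H (the linear span of {φ_i} is dense in H). Then for every real r > 0 the family is orthogonal with respect to the r-th left-definite inner product, i.e. ⟨A^{r/2} φ_i, A^{r/2} φ_j⟩ = 0 for i ≠ j, and it is complete with respect to it, i.e. if x ∈ H satisfies ⟨A^{r/2} x, A^{r/2} φ_i⟩ = 0 for all i, then x = 0. (Bounded-operator case of Littlejohn–Wellman's Theorem 3.7 on stability of complete orthogonal systems of eigenfunctions in left-definite spaces.) -/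
/-!
The functional calculus acts on an eigenvector of `A` for the eigenvalue `λ` as multiplication
by `f λ` (true for polynomials, hence for all continuous `f` by Stone–Weierstrass), so
`A ^ (r / 2) φ i = λ i ^ (r / 2) • φ i` with `λ i > 0`. This gives orthogonality at once, and
turns `⟪A ^ (r / 2) x, A ^ (r / 2) φ i⟫ = 0` into `A ^ (r / 2) x ⊥ φ i` for all `i`, so
`A ^ (r / 2) x = 0` by completeness in `H`. Finally `A ≥ k > 0` is invertible, hence so is
`A ^ (r / 2)`.
-/

open scoped InnerProductSpace ComplexOrder

lemma ContinuousLinearMap.eq_zero_of_isUnit_of_apply_eq_zero {𝕜 E : Type*} [Semiring 𝕜]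
    [TopologicalSpace E] [AddCommMonoid E] [Module 𝕜 E] [ContinuousAdd E]
    {T : E →L[𝕜] E} (hT : IsUnit T) {x : E} (hx : T x = 0) : x = 0 :=
  ((Module.End.isUnit_iff _).1 (hT.map toLinearMapRingHom)).injective (hx.trans (map_zero T).symm)

lemma ContinuousLinearMap.mem_spectrum_of_apply_eq_smul {E : Type*} [NormedAddCommGroup E]
    [NormedSpace ℂ E] {T : E →L[ℂ] E} {μ : ℝ} {v : E} (hv₀ : v ≠ 0)
    (hv : T v = (μ : ℂ) • v) : μ ∈ spectrum ℝ T := by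
  refine spectrum.mem_iff.2 fun hunit ↦ hv₀ (eq_zero_of_isUnit_of_apply_eq_zero hunit ?_)
  simp [Algebra.algebraMap_eq_smul_one, hv, Complex.coe_smul]

lemma eq_zero_of_forall_inner_eq_zero_of_dense_span {𝕜 E ι : Type*} [RCLike 𝕜]
    [NormedAddCommGroup E] [InnerProductSpace 𝕜 E] {v : ι → E}
    (hv : Dense (Submodule.span 𝕜 (Set.range v) : Set E)) {x : E}
    (hx : ∀ i, ⟪x, v i⟫_𝕜 = 0) : x = 0 := by
  have hspan : Submodule.span 𝕜 (Set.range v) ≤ LinearMap.ker (innerₛₗ 𝕜 x) :=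
    Submodule.span_le.2 (Set.range_subset_iff.2 hx)
  exact hv.eq_zero_of_inner_left 𝕜 fun u hu ↦ hspan hu

section Eigenvector

variable {H : Type*} [NormedAddCommGroup H] [InnerProductSpace ℂ H] [CompleteSpace H]
  {A : H →L[ℂ] H} {μ : ℝ} {v : H}

lemma cfcHom_apply_of_apply_eq_smul (hA : IsSelfAdjoint A) (hμ : μ ∈ spectrum ℝ A)
    (hv : A v = (μ : ℂ) • v) (f : C(spectrum ℝ A, ℝ)) :
    cfcHom hA f v = (f ⟨μ, hμ⟩ : ℂ) • v := by
  induction f using ContinuousMap.induction_on_of_compact with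
  | const c =>
    change cfcHom hA (algebraMap ℝ _ c) v = _
    rw [AlgHomClass.commutes, Algebra.algebraMap_eq_smul_one]
    exact (Complex.coe_smul c v).symm
  | id => simpa [cfcHom_id hA] using hv
  | star_id => simpa [cfcHom_id hA] using hv
  | add f g hf hg => simp [hf, hg, add_smul]
  | mul f g hf hg =>
    rw [map_mul, mul_apply_eq_comp, hg, map_smul, hf, smul_smul,
      ContinuousMap.mul_apply, Complex.ofReal_mul, mul_comm]
  | frequently f hf =>
    have hclosed : IsClosed {g : C(spectrum ℝ A, ℝ) | cfcHom hA g v = (g ⟨μ, hμ⟩ : ℂ) • v} :=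
      isClosed_eq ((ContinuousLinearMap.apply ℂ H v).continuous.comp (cfcHom_continuous hA))
        (by fun_prop)
    exact hclosed.closure_subset (mem_closure_iff_frequently.2 hf)

lemma cfc_apply_of_apply_eq_smul (hA : IsSelfAdjoint A) (hv₀ : v ≠ 0) (hv : A v = (μ : ℂ) • v)
    (f : ℝ → ℝ) (hf : ContinuousOn f (spectrum ℝ A)) : cfc f A v = (f μ : ℂ) • v := by
  rw [cfc_apply f A hA hf]
  exact cfcHom_apply_of_apply_eq_smul hA
    (ContinuousLinearMap.mem_spectrum_of_apply_eq_smul hv₀ hv) hv ⟨_, hf.domRestrict⟩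

lemma CFC.rpow_apply_of_apply_eq_smul (hA : IsStrictlyPositive A) (hv₀ : v ≠ 0)
    (hv : A v = (μ : ℂ) • v) (s : ℝ) : (A ^ s) v = ((μ ^ s : ℝ) : ℂ) • v := by
  have hcont : ContinuousOn (· ^ s) (spectrum ℝ A) := fun x hx ↦
    (Real.continuousAt_rpow_const x s (.inl (hA.spectrum_pos hx).ne')).continuousWithinAt
  rw [CFC.rpow_eq_cfc_real hA.nonneg]
  exact cfc_apply_of_apply_eq_smul hA.isSelfAdjoint hv₀ hv _ hcont

end Eigenvector

lemma ContinuousLinearMap.algebraMap_le_of_forall_le_inner {H : Type*} [NormedAddCommGroup H]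
    [InnerProductSpace ℂ H] [CompleteSpace H] {A : H →L[ℂ] H} (hA : IsSelfAdjoint A) {k : ℝ}
    (h : ∀ x, (k : ℂ) * ⟪x, x⟫_ℂ ≤ ⟪A x, x⟫_ℂ) : algebraMap ℝ (H →L[ℂ] H) k ≤ A := by
  rw [le_def, isPositive_iff']
  refine ⟨hA.sub (.algebraMap _ (.all k)), fun x ↦ ?_⟩
  have hsub : (A - algebraMap ℝ (H →L[ℂ] H) k) x = A x - (k : ℂ) • x := by
    simp [Algebra.algebraMap_eq_smul_one, Complex.coe_smul]
  rw [hsub, inner_sub_left, inner_smul_left, Complex.conj_ofReal, sub_nonneg]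
  exact h x

theorem leftDefinite_complete_orthogonal_eigenfunctions_general
    {H : Type*} [NormedAddCommGroup H] [InnerProductSpace ℂ H] [CompleteSpace H]
    (A : H →L[ℂ] H) (hA : IsSelfAdjoint A) (k : ℝ) (hk : 0 < k)
    (hbound : ∀ x : H, (k : ℂ) * ⟪x, x⟫_ℂ ≤ ⟪A x, x⟫_ℂ)
    {ι : Type*} (φ : ι → H) (lam : ι → ℝ)
    (hne : ∀ i, φ i ≠ 0)
    (heig : ∀ i, A (φ i) = (lam i : ℂ) • φ i)
    (horth : ∀ i j, i ≠ j → ⟪φ i, φ j⟫_ℂ = 0)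
    (hcomplete : Dense ((Submodule.span ℂ (Set.range φ) : Submodule ℂ H) : Set H))
    (r : ℝ) :
    (∀ i j, i ≠ j → ⟪CFC.rpow A (r / 2) (φ i), CFC.rpow A (r / 2) (φ j)⟫_ℂ = 0) ∧
      ∀ x : H, (∀ i, ⟪CFC.rpow A (r / 2) x, CFC.rpow A (r / 2) (φ i)⟫_ℂ = 0) → x = 0 := by
  have hA_pos : IsStrictlyPositive A := (isStrictlyPositive_algebraMap hk).of_le
    (ContinuousLinearMap.algebraMap_le_of_forall_le_inner hA hbound)
  have hφ (i : ι) : (A ^ (r / 2)) (φ i) = ((lam i ^ (r / 2) : ℝ) : ℂ) • φ i :=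
    CFC.rpow_apply_of_apply_eq_smul hA_pos (hne i) (heig i) _
  have hlam (i : ι) : 0 < lam i :=
    hA_pos.spectrum_pos (ContinuousLinearMap.mem_spectrum_of_apply_eq_smul (hne i) (heig i))
  simp only [CFC.rpow_eq_pow]
  refine ⟨fun i j hij ↦ ?_, fun x hx ↦ ?_⟩
  · rw [hφ i, hφ j, inner_smul_left, inner_smul_right, horth i j hij, mul_zero, mul_zero]
  · have hx' (i : ι) : ⟪CFC.rpow A (r / 2) x, φ i⟫_ℂ = 0 := by
      have hpow : ((lam i ^ (r / 2) : ℝ) : ℂ) ≠ 0 :=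
        mod_cast (Real.rpow_pos_of_pos (hlam i) _).ne'
      simpa [hφ i, inner_smul_right, hpow] using hx i
    exact ContinuousLinearMap.eq_zero_of_isUnit_of_apply_eq_zero
      (hA_pos.isUnit.cfcRpow (r / 2) hA_pos.nonneg)
      (eq_zero_of_forall_inner_eq_zero_of_dense_span hcomplete hx')

/-- Bounded-operator case of Littlejohn–Wellman's Theorem 3.7: a complete orthogonal
family of (nonzero) eigenvectors of a bounded self-adjoint operator `A` with
`⟪A x, x⟫ ≥ k ⟪x, x⟫`, `k > 0`, remains a complete orthogonal family with respect to
every `r`-th left-definite inner product `⟨x, y⟩_r = ⟪A^{r/2} x, A^{r/2} y⟫`, `r > 0`. -/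
theorem leftDefinite_complete_orthogonal_eigenfunctions
    {H : Type*} [NormedAddCommGroup H] [InnerProductSpace ℂ H] [CompleteSpace H]
    (A : H →L[ℂ] H) (hA : IsSelfAdjoint A) (k : ℝ) (hk : 0 < k)
    (hbound : ∀ x : H, (k : ℂ) * ⟪x, x⟫_ℂ ≤ ⟪A x, x⟫_ℂ)
    {ι : Type*} (φ : ι → H) (lam : ι → ℝ)
    (hne : ∀ i, φ i ≠ 0)
    (heig : ∀ i, A (φ i) = (lam i : ℂ) • φ i)
    (horth : ∀ i j, i ≠ j → ⟪φ i, φ j⟫_ℂ = 0)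
    (hcomplete : Dense ((Submodule.span ℂ (Set.range φ) : Submodule ℂ H) : Set H))
    (r : ℝ) (hr : 0 < r) :
    (∀ i j, i ≠ j → ⟪CFC.rpow A (r / 2) (φ i), CFC.rpow A (r / 2) (φ j)⟫_ℂ = 0) ∧
      ∀ x : H, (∀ i, ⟪CFC.rpow A (r / 2) x, CFC.rpow A (r / 2) (φ i)⟫_ℂ = 0) → x = 0 :=
  leftDefinite_complete_orthogonal_eigenfunctions_general A hA k hk hbound φ lam hne heig horth
    hcomplete r
end

section
/- Existence of boundary limits of the sesquilinear form on the maximal domain: let a < b be real numbers, let p, q, w : ℝ → ℝ with w(x) > 0 on (a, b), and let f, g : ℝ → ℂ be such that on (a, b) the functions f, g, p·f′, p·g′ are differentiable with continuous derivatives, and such that f, g, ℓ[f], ℓ[g] all belong to L²((a, b), w·dx) (i.e. ∫_a^b |f|² w < ∞, ∫_a^b |ℓ[f]|² w < ∞, and likewise for g), where ℓ[u](x) := −(1/w(x))·((p·u′)′(x) + q(x)·u(x)). Then the limit lim_{x → b⁻} p(x)·( f(x)·conj(g′(x)) − f′(x)·conj(g(x)) ) exists (as a finite complex number); that is, there exists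 L ∈ ℂ such that the function x ↦ p(x)·( f(x)·conj(g′(x)) − f′(x)·conj(g(x)) ) tends to L as x tends to b from the left. -/
/-!
Writing `P u = p u′`, the form is `[f, g] = f · conj (P g) − P f · conj g`, whose derivative is
`f · conj (P g)′ − (P f)′ · conj g = w (ℓ[f] conj g − f conj ℓ[g])`: the terms with `p f′ conj g′`
and with the real potential `q` cancel (Lagrange's identity). By `|u v| ≤ (|u|² + |v|²) / 2` this
derivative is integrable on `(a, b)` as soon as `f, g, ℓ[f], ℓ[g] ∈ L²(w)`, and a function with
integrable derivative near `b` has a limit at `b`.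
-/

open scoped InnerProductSpace
open ComplexConjugate MeasureTheory

/-- The Sturm–Liouville differential expression `ℓ[u](x) = −(1/w)((p u′)′ + q u)(x)`
with real coefficients `p, q, w`, applied to a complex-valued function `u`. -/
noncomputable def sturmLiouville (p q w : ℝ → ℝ) (u : ℝ → ℂ) (x : ℝ) : ℂ :=
  -(1 / (w x : ℂ)) * (deriv (fun t => (p t : ℂ) * deriv u t) x + (q x : ℂ) * u x)

open Filter Set Topology

noncomputable def modifiedWronskian (p : ℝ → ℝ) (f g : ℝ → ℂ) (x : ℝ) : ℂ :=
  p x * (f x * conj (deriv g x) - deriv f x * conj (g x))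

theorem exists_tendsto_nhdsLT_of_integrableOn_deriv {E : Type*} [NormedAddCommGroup E]
    [NormedSpace ℝ E] [CompleteSpace E] {F : ℝ → E} {a b : ℝ} (hab : a < b)
    (hF : ∀ x ∈ Ioo a b, DifferentiableAt ℝ F x) (hF' : IntegrableOn (deriv F) (Ioo a b)) :
    ∃ L, Tendsto F (𝓝[<] b) (𝓝 L) := by
  obtain ⟨c, hac, hcb⟩ := exists_between hab
  have hIcc : IntegrableOn (deriv F) (uIcc c b) := by
    rw [uIcc_of_le hcb.le, integrableOn_Icc_iff_integrableOn_Ioo]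
    exact hF'.mono_set (Ioo_subset_Ioo_left hac.le)
  have hFTC : ∀ x ∈ Ioo c b, F c + ∫ t in c..x, deriv F t = F x := by
    intro x hx
    have hsub : uIcc c x ⊆ Ioo a b := by
      rw [uIcc_of_le hx.1.le]
      exact Icc_subset_Ioo hac hx.2
    rw [intervalIntegral.integral_eq_sub_of_hasDerivAt
      (fun t ht => (hF t (hsub ht)).hasDerivAt) (hF'.mono_set hsub).intervalIntegrable]
    abel
  have hprim : Tendsto (fun x => ∫ t in c..x, deriv F t) (𝓝[<] b)
      (𝓝 (∫ t in c..b, deriv F t)) := by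
    rw [← nhdsWithin_Ioo_eq_nhdsLT hcb]
    refine ((intervalIntegral.continuousOn_primitive_interval hIcc) b right_mem_uIcc).mono_left
      (nhdsWithin_mono _ ?_)
    rw [uIcc_of_le hcb.le]
    exact Ioo_subset_Icc_self
  refine ⟨F c + ∫ t in c..b, deriv F t, (tendsto_const_nhds.add hprim).congr' ?_⟩
  rw [← nhdsWithin_Ioo_eq_nhdsLT hcb]
  exact eventually_nhdsWithin_of_forall hFTC

theorem hasDerivAt_modifiedWronskian {p : ℝ → ℝ} {f g : ℝ → ℂ} {x : ℝ}
    (hf : DifferentiableAt ℝ f x) (hg : DifferentiableAt ℝ g x)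
    (hpf : DifferentiableAt ℝ (fun t => (p t : ℂ) * deriv f t) x)
    (hpg : DifferentiableAt ℝ (fun t => (p t : ℂ) * deriv g t) x) :
    HasDerivAt (modifiedWronskian p f g)
      (f x * conj (deriv (fun t => (p t : ℂ) * deriv g t) x)
        - deriv (fun t => (p t : ℂ) * deriv f t) x * conj (g x)) x := by
  have hform : modifiedWronskian p f g =
      fun t => f t * conj ((p t : ℂ) * deriv g t) - (p t : ℂ) * deriv f t * conj (g t) := by
    funext t
    simp only [modifiedWronskian, map_mul, Complex.conj_ofReal]
    ring
  rw [hform]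
  refine ((hf.hasDerivAt.mul hpg.hasDerivAt.star).sub
    (hpf.hasDerivAt.mul hg.hasDerivAt.star)).congr_deriv ?_
  simp only [Complex.star_def, map_mul, Complex.conj_ofReal]
  ring

theorem lagrange_identity (p q w : ℝ → ℝ) (f g : ℝ → ℂ) {x : ℝ} (hw : w x ≠ 0) :
    f x * conj (deriv (fun t => (p t : ℂ) * deriv g t) x)
        - deriv (fun t => (p t : ℂ) * deriv f t) x * conj (g x)
      = w x * (sturmLiouville p q w f x * conj (g x) - f x * conj (sturmLiouville p q w g x)) := by
  have hw' : (w x : ℂ) ≠ 0 := by exact_mod_cast hw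
  simp only [sturmLiouville, map_mul, map_add, map_neg, map_div₀, map_one, Complex.conj_ofReal]
  field_simp
  ring

theorem norm_ofReal_mul_mul_conj_le {r : ℝ} (hr : 0 ≤ r) (u v : ℂ) :
    ‖(r : ℂ) * (u * conj v)‖ ≤ (‖u‖ ^ 2 * r + ‖v‖ ^ 2 * r) / 2 := by
  rw [norm_mul, norm_mul, Complex.norm_conj, Complex.norm_real, Real.norm_of_nonneg hr]
  nlinarith [two_mul_le_add_sq ‖u‖ ‖v‖]

theorem norm_ofReal_mul_sub_le {r : ℝ} (hr : 0 ≤ r) (u v u' v' : ℂ) :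
    ‖(r : ℂ) * (u * conj v - u' * conj v')‖
      ≤ (‖u‖ ^ 2 * r + ‖v‖ ^ 2 * r + (‖u'‖ ^ 2 * r + ‖v'‖ ^ 2 * r)) / 2 := by
  rw [mul_sub]
  refine (norm_sub_le _ _).trans ?_
  linarith [norm_ofReal_mul_mul_conj_le hr u v, norm_ofReal_mul_mul_conj_le hr u' v']

theorem sesquilinearForm_tendsto_boundary_general
    (a b : ℝ) (hab : a < b) (p q w : ℝ → ℝ)
    (hw : ∀ x ∈ Set.Ioo a b, 0 < w x)
    (f g : ℝ → ℂ)
    (hf : ∀ x ∈ Set.Ioo a b, DifferentiableAt ℝ f x)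
    (hg : ∀ x ∈ Set.Ioo a b, DifferentiableAt ℝ g x)
    (hpf : ∀ x ∈ Set.Ioo a b, DifferentiableAt ℝ (fun t => (p t : ℂ) * deriv f t) x)
    (hpg : ∀ x ∈ Set.Ioo a b, DifferentiableAt ℝ (fun t => (p t : ℂ) * deriv g t) x)
    (hfL2 : IntegrableOn (fun x => ‖f x‖ ^ 2 * w x) (Set.Ioo a b))
    (hgL2 : IntegrableOn (fun x => ‖g x‖ ^ 2 * w x) (Set.Ioo a b))
    (hlfL2 : IntegrableOn (fun x => ‖sturmLiouville p q w f x‖ ^ 2 * w x) (Set.Ioo a b))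
    (hlgL2 : IntegrableOn (fun x => ‖sturmLiouville p q w g x‖ ^ 2 * w x) (Set.Ioo a b)) :
    ∃ L : ℂ,
      Filter.Tendsto
        (fun x => (p x : ℂ) * (f x * conj (deriv g x) - deriv f x * conj (g x)))
        (nhdsWithin b (Set.Ioo a b)) (nhds L) := by
  have hderiv : ∀ x ∈ Ioo a b, HasDerivAt (modifiedWronskian p f g)
      (w x * (sturmLiouville p q w f x * conj (g x) - f x * conj (sturmLiouville p q w g x))) x :=
    fun x hx => lagrange_identity p q w f g (hw x hx).ne' ▸
      hasDerivAt_modifiedWronskian (hf x hx) (hg x hx) (hpf x hx) (hpg x hx)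
  have hint : IntegrableOn (deriv (modifiedWronskian p f g)) (Ioo a b) := by
    refine Integrable.mono' (((hlfL2.add hgL2).add (hfL2.add hlgL2)).div_const 2)
      (aestronglyMeasurable_deriv _ _) ?_
    filter_upwards [ae_restrict_mem measurableSet_Ioo] with x hx
    rw [(hderiv x hx).deriv]
    exact norm_ofReal_mul_sub_le (hw x hx).le _ _ _ _
  obtain ⟨L, hL⟩ := exists_tendsto_nhdsLT_of_integrableOn_deriv hab
    (fun x hx => (hderiv x hx).differentiableAt) hint
  exact ⟨L, hL.mono_left (nhdsWithin_mono _ Ioo_subset_Iio_self)⟩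

/-- Existence of boundary limits of the sesquilinear form on the maximal domain: if
`f, g, ℓ[f], ℓ[g]` all belong to `L²((a, b), w dx)`, then the modified Wronskian
`[f, g](x) = p(x)(f(x) conj g′(x) − f′(x) conj g(x))` has a finite limit as `x → b⁻`. -/
theorem sesquilinearForm_tendsto_boundary
    (a b : ℝ) (hab : a < b) (p q w : ℝ → ℝ)
    (hw : ∀ x ∈ Set.Ioo a b, 0 < w x)
    (f g : ℝ → ℂ)
    (hf : ∀ x ∈ Set.Ioo a b, DifferentiableAt ℝ f x)
    (hg : ∀ x ∈ Set.Ioo a b, DifferentiableAt ℝ g x)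
    (hpf : ∀ x ∈ Set.Ioo a b, DifferentiableAt ℝ (fun t => (p t : ℂ) * deriv f t) x)
    (hpg : ∀ x ∈ Set.Ioo a b, DifferentiableAt ℝ (fun t => (p t : ℂ) * deriv g t) x)
    (hfc' : ContinuousOn (deriv f) (Set.Ioo a b))
    (hgc' : ContinuousOn (deriv g) (Set.Ioo a b))
    (hpfc' : ContinuousOn (deriv fun t => (p t : ℂ) * deriv f t) (Set.Ioo a b))
    (hpgc' : ContinuousOn (deriv fun t => (p t : ℂ) * deriv g t) (Set.Ioo a b))
    (hfL2 : IntegrableOn (fun x => ‖f x‖ ^ 2 * w x) (Set.Ioo a b))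
    (hgL2 : IntegrableOn (fun x => ‖g x‖ ^ 2 * w x) (Set.Ioo a b))
    (hlfL2 : IntegrableOn (fun x => ‖sturmLiouville p q w f x‖ ^ 2 * w x) (Set.Ioo a b))
    (hlgL2 : IntegrableOn (fun x => ‖sturmLiouville p q w g x‖ ^ 2 * w x) (Set.Ioo a b)) :
    ∃ L : ℂ,
      Filter.Tendsto
        (fun x => (p x : ℂ) * (f x * conj (deriv g x) - deriv f x * conj (g x)))
        (nhdsWithin b (Set.Ioo a b)) (nhds L) :=
  sesquilinearForm_tendsto_boundary_general a b hab p q w hw f g hf hg hpf hpg hfL2 hgL2 hlfL2 hlgL2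
end

section
/- Semi-boundedness from Dirichlet's formula: let [c, d] be a compact interval, a₀, a₁ : ℝ → ℝ with a₀(x) ≥ k > 0 and a₁(x) ≥ 0 for all x ∈ [c, d], and let f : ℝ → ℂ be differentiable on [c, d] with a₁·f′ differentiable on [c, d], all relevant functions continuous on [c, d], and suppose the boundary term vanishes: a₁(d)·f′(d)·conj(f(d)) = a₁(c)·f′(c)·conj(f(c)). With ℓ¹[f](x) := a₀(x)·f(x) − (a₁·f′)′(x), one has re( ∫_c^d ℓ¹[f](x)·conj(f(x)) dx ) ≥ k · ∫_c^d |f(x)|² dx. -/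
open ComplexConjugate intervalIntegral

/-- The Lagrangian symmetric differential expression of order 2 with real coefficient
functions `a₀, a₁`: `ℓ¹[f](x) = a₀(x) f(x) − (a₁ f′)′(x)`. -/
noncomputable def lagrangianSecondOrder (a₀ a₁ : ℝ → ℝ) (f : ℝ → ℂ) (x : ℝ) : ℂ :=
  (a₀ x : ℂ) * f x - deriv (fun t => (a₁ t : ℂ) * deriv f t) x

open Set MeasureTheory

/-
Integrating `(a₁ f′)′ · conj f` by parts (Dirichlet's formula) gives
`∫ ℓ¹[f] conj f = ∫ a₀ |f|² + ∫ a₁ |f′|² − [a₁ f′ conj f]_c^d`.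
The boundary term vanishes by hypothesis, the middle integral is nonnegative since `a₁ ≥ 0`,
and the first is at least `k ∫ |f|²` since `a₀ ≥ k`.
-/

theorem ofReal_mul_mul_conj (a : ℝ) (z : ℂ) : (a : ℂ) * z * conj z = ((a * ‖z‖ ^ 2 : ℝ) : ℂ) := by
  rw [mul_assoc, Complex.mul_conj']
  push_cast
  rfl

section Dirichlet

variable {a₀ a₁ : ℝ → ℝ} {f : ℝ → ℂ} {c d : ℝ}

theorem integral_lagrangianSecondOrder_mul_conj
    (hf : ∀ x ∈ uIcc c d, DifferentiableAt ℝ f x)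
    (haf : ∀ x ∈ uIcc c d, DifferentiableAt ℝ (fun t => (a₁ t : ℂ) * deriv f t) x)
    (ha₀c : ContinuousOn a₀ (uIcc c d)) (hfc' : ContinuousOn (deriv f) (uIcc c d))
    (hafc' : ContinuousOn (deriv fun t => (a₁ t : ℂ) * deriv f t) (uIcc c d)) :
    ∫ x in c..d, lagrangianSecondOrder a₀ a₁ f x * conj (f x) =
      ((∫ x in c..d, a₀ x * ‖f x‖ ^ 2 : ℝ) : ℂ) + ((∫ x in c..d, a₁ x * ‖deriv f x‖ ^ 2 : ℝ) : ℂ)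
        - ((a₁ d : ℂ) * deriv f d * conj (f d) - (a₁ c : ℂ) * deriv f c * conj (f c)) := by
  set g := fun t => (a₁ t : ℂ) * deriv f t
  have hfc : ContinuousOn f (uIcc c d) :=
    continuousOn_of_forall_continuousAt fun x hx => (hf x hx).continuousAt
  have hconj_f : ContinuousOn (fun x => conj (f x)) (uIcc c d) :=
    Complex.continuous_conj.comp_continuousOn hfc
  have hconj_f' : ContinuousOn (fun x => conj (deriv f x)) (uIcc c d) :=
    Complex.continuous_conj.comp_continuousOn hfc'
  have parts : ∫ x in c..d, conj (f x) * deriv g x =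
      conj (f d) * g d - conj (f c) * g c - ∫ x in c..d, conj (deriv f x) * g x :=
    integral_mul_deriv_eq_deriv_mul (fun x hx => (hf x hx).hasDerivAt.star)
      (fun x hx => (haf x hx).hasDerivAt) hconj_f'.intervalIntegrable hafc'.intervalIntegrable
  have h_lagrangian : ∫ x in c..d, lagrangianSecondOrder a₀ a₁ f x * conj (f x) =
      ∫ x in c..d, (((a₀ x * ‖f x‖ ^ 2 : ℝ) : ℂ) - conj (f x) * deriv g x) := by
    refine integral_congr fun x _ => ?_
    rw [← ofReal_mul_mul_conj, lagrangianSecondOrder]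
    ring
  have h_energy : ∫ x in c..d, conj (deriv f x) * g x =
      ((∫ x in c..d, a₁ x * ‖deriv f x‖ ^ 2 : ℝ) : ℂ) := by
    rw [← integral_ofReal]
    refine integral_congr fun x _ => ?_
    rw [← ofReal_mul_mul_conj]
    ring
  have h_int_potential : IntervalIntegrable (fun x => ((a₀ x * ‖f x‖ ^ 2 : ℝ) : ℂ)) volume c d :=
    (Complex.continuous_ofReal.comp_continuousOn (ha₀c.mul (hfc.norm.pow 2))).intervalIntegrable
  have h_int_kinetic : IntervalIntegrable (fun x => conj (f x) * deriv g x) volume c d :=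
    (hconj_f.mul hafc').intervalIntegrable
  rw [h_lagrangian, integral_sub h_int_potential h_int_kinetic, integral_ofReal, parts, h_energy]
  ring

end Dirichlet

theorem lagrangian_semibounded_general
    (c d : ℝ) (hcd : c ≤ d) (a₀ a₁ : ℝ → ℝ) (k : ℝ)
    (ha₀ : ∀ x ∈ Set.Icc c d, k ≤ a₀ x)
    (ha₁ : ∀ x ∈ Set.Icc c d, 0 ≤ a₁ x)
    (f : ℝ → ℂ)
    (hf : ∀ x ∈ Set.Icc c d, DifferentiableAt ℝ f x)
    (haf : ∀ x ∈ Set.Icc c d, DifferentiableAt ℝ (fun t => (a₁ t : ℂ) * deriv f t) x)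
    (ha₀c : ContinuousOn a₀ (Set.Icc c d))
    (hfc' : ContinuousOn (deriv f) (Set.Icc c d))
    (hafc' : ContinuousOn (deriv fun t => (a₁ t : ℂ) * deriv f t) (Set.Icc c d))
    (hboundary : (a₁ d : ℂ) * deriv f d * conj (f d) = (a₁ c : ℂ) * deriv f c * conj (f c)) :
    k * ∫ x in c..d, ‖f x‖ ^ 2 ≤
      (∫ x in c..d, lagrangianSecondOrder a₀ a₁ f x * conj (f x)).re := by
  rw [← uIcc_of_le hcd] at hf haf ha₀c hfc' hafc'
  rw [integral_lagrangianSecondOrder_mul_conj hf haf ha₀c hfc' hafc', hboundary, sub_self, sub_zero,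
    ← Complex.ofReal_add, Complex.ofReal_re, ← intervalIntegral.integral_const_mul]
  have hf_sq : ContinuousOn (fun x => ‖f x‖ ^ 2) (uIcc c d) :=
    (continuousOn_of_forall_continuousAt fun x hx => (hf x hx).continuousAt).norm.pow 2
  refine le_add_of_le_of_nonneg ?_ ?_
  · refine integral_mono_on hcd (continuousOn_const.mul hf_sq).intervalIntegrable
      (ha₀c.mul hf_sq).intervalIntegrable fun x hx => ?_
    exact mul_le_mul_of_nonneg_right (ha₀ x hx) (sq_nonneg _)
  · exact integral_nonneg hcd fun x hx => mul_nonneg (ha₁ x hx) (sq_nonneg _)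

/-- Semi-boundedness from Dirichlet's formula: if `a₀ ≥ k > 0` and `a₁ ≥ 0` on `[c, d]`
and the boundary term vanishes, then
`re ∫_c^d ℓ¹[f] conj f ≥ k ∫_c^d |f|²`. -/
theorem lagrangian_semibounded
    (c d : ℝ) (hcd : c ≤ d) (a₀ a₁ : ℝ → ℝ) (k : ℝ) (hk : 0 < k)
    (ha₀ : ∀ x ∈ Set.Icc c d, k ≤ a₀ x)
    (ha₁ : ∀ x ∈ Set.Icc c d, 0 ≤ a₁ x)
    (f : ℝ → ℂ)
    (hf : ∀ x ∈ Set.Icc c d, DifferentiableAt ℝ f x)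
    (haf : ∀ x ∈ Set.Icc c d, DifferentiableAt ℝ (fun t => (a₁ t : ℂ) * deriv f t) x)
    (ha₀c : ContinuousOn a₀ (Set.Icc c d)) (ha₁c : ContinuousOn a₁ (Set.Icc c d))
    (hfc : ContinuousOn f (Set.Icc c d))
    (hfc' : ContinuousOn (deriv f) (Set.Icc c d))
    (hafc' : ContinuousOn (deriv fun t => (a₁ t : ℂ) * deriv f t) (Set.Icc c d))
    (hboundary : (a₁ d : ℂ) * deriv f d * conj (f d) = (a₁ c : ℂ) * deriv f c * conj (f c)) :
    k * ∫ x in c..d, ‖f x‖ ^ 2 ≤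
      (∫ x in c..d, lagrangianSecondOrder a₀ a₁ f x * conj (f x)).re :=
  lagrangian_semibounded_general c d hcd a₀ a₁ k ha₀ ha₁ f hf haf ha₀c hfc' hafc' hboundary
end

section
/- Von Neumann's formula: let A be a densely defined unbounded operator on a complex Hilbert space H that is symmetric (⟨A x, y⟩ = ⟨x, A y⟩ for all x, y ∈ dom(A)) and closed (its graph is a closed subset of H × H), and let A* denote its adjoint. Then every x ∈ dom(A*) can be written uniquely as x = x₀ + x₊ + x₋, where x₀ ∈ dom(A), x₊ ∈ dom(A*) with A* x₊ = i • x₊, and x₋ ∈ dom(A*) with A* x₋ = −i • x₋. That is, dom(A*) is the direct sum of dom(A), the positive defect space D₊ = { u ∈ dom(A*) : A* u = i u }, and the negative defect space D₋ = { u ∈ dom(A*) : A* u = −i u }. -/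
/-!
The graph of a closed symmetric `A` is complete, and on it `(u, A u) ↦ A u - i u` is bounded
below because `‖A u - i u‖² = ‖A u‖² + ‖u‖²`. Hence `ran (A - i)` is closed and
`H = ran (A - i) ⊕ ran (A - i)ᗮ`, where `ran (A - i)ᗮ = ker (A* + i)`. Splitting
`A* x - i x = (A - i) x₀ + w` accordingly, `x₋ := (i/2) w` satisfies `(A* - i) x₋ = w`, so
`x₊ := x - x₀ - x₋ ∈ ker (A* - i)`. For uniqueness, applying `A* - i` to `x₀ + x₊ + x₋ = 0` gives
`(A - i) x₀ = 2i x₋`, which lies both in `ran (A - i)` and in its orthogonal complement.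
-/

open scoped InnerProductSpace ComplexConjugate NNReal
open LinearPMap

namespace LinearPMap

section RCLike

variable {𝕜 E : Type*} [RCLike 𝕜] [NormedAddCommGroup E] [InnerProductSpace 𝕜 E]

def shift (T : E →ₗ.[𝕜] E) (c : 𝕜) : T.domain →ₗ[𝕜] E :=
  T.toFun - c • T.domain.subtype

@[simp]
theorem shift_apply (T : E →ₗ.[𝕜] E) (c : 𝕜) (u : T.domain) :
    T.shift c u = T u - c • (u : E) :=
  rfl

theorem shift_apply_of_le {S T : E →ₗ.[𝕜] E} (h : S ≤ T) (c : 𝕜) (u : S.domain) :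
    T.shift c (Submodule.inclusion h.1 u) = S.shift c u := by
  rw [shift_apply, shift_apply, h.2 (x := u) (y := Submodule.inclusion h.1 u) rfl,
    Submodule.coe_inclusion]

variable [CompleteSpace E]

noncomputable def defectSpace (T : E →ₗ.[𝕜] E) (c : 𝕜) : Submodule 𝕜 E :=
  (LinearMap.ker (T†.shift c)).map T†.domain.subtype

theorem mem_defectSpace_iff {T : E →ₗ.[𝕜] E} {c : 𝕜} {y : E} :
    y ∈ T.defectSpace c ↔ ∃ hy : y ∈ T†.domain, T† ⟨y, hy⟩ = c • y := by
  simp [defectSpace, sub_eq_zero]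

theorem coe_mem_defectSpace_iff {T : E →ₗ.[𝕜] E} {c : 𝕜} {y : T†.domain} :
    (y : E) ∈ T.defectSpace c ↔ T†.shift c y = 0 := by
  simp [defectSpace]

theorem adjoint_shift_of_mem_defectSpace {T : E →ₗ.[𝕜] E} {c d : 𝕜} {y : T†.domain}
    (hy : (y : E) ∈ T.defectSpace d) : T†.shift c y = (d - c) • (y : E) := by
  obtain ⟨_, hTy⟩ := mem_defectSpace_iff.1 hy
  rw [shift_apply, sub_smul, ← hTy]

theorem orthogonal_range_shift {T : E →ₗ.[𝕜] E} (hT : Dense (T.domain : Set E)) (c : 𝕜) :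
    (LinearMap.range (T.shift c))ᗮ = T.defectSpace (conj c) := by
  ext y
  have inner_shift (u : T.domain) :
      ⟪T.shift c u, y⟫_𝕜 = conj (⟪y, T u⟫_𝕜 - ⟪conj c • y, (u : E)⟫_𝕜) := by
    simp [inner_sub_left, inner_smul_left, inner_conj_symm]
  simp only [Submodule.mem_orthogonal, LinearMap.mem_range, forall_exists_index,
    forall_apply_eq_imp_iff, inner_shift, map_eq_zero, sub_eq_zero, mem_defectSpace_iff]
  refine ⟨fun h ↦ ?_, fun ⟨hy, hTy⟩ u ↦ ?_⟩
  · have hy : y ∈ T†.domain := mem_adjoint_domain_of_exists y ⟨_, fun u ↦ (h u).symm⟩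
    exact ⟨hy, adjoint_apply_eq hT ⟨y, hy⟩ fun u ↦ (h u).symm⟩
  · rw [← hTy]
    exact (adjoint_isFormalAdjoint hT ⟨y, hy⟩ u).symm

end RCLike

variable {H : Type*} [NormedAddCommGroup H] [InnerProductSpace ℂ H] {A : H →ₗ.[ℂ] H}

theorem norm_shift_I_sq (hsym : A.IsFormalAdjoint A) (u : A.domain) :
    ‖A.shift Complex.I u‖ ^ 2 = ‖A u‖ ^ 2 + ‖(u : H)‖ ^ 2 := by
  have hreal : conj ⟪A u, (u : H)⟫_ℂ = ⟪A u, (u : H)⟫_ℂ := by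
    rw [inner_conj_symm]; exact (hsym u u).symm
  have hre : RCLike.re ⟪A u, Complex.I • (u : H)⟫_ℂ = 0 := by
    simp [Complex.conj_eq_iff_im.1 hreal]
  rw [shift_apply, @norm_sub_sq ℂ, hre, norm_smul]
  simp

theorem norm_le_norm_shift_I (hsym : A.IsFormalAdjoint A) (u : A.domain) :
    ‖(u : H)‖ ≤ ‖A.shift Complex.I u‖ :=
  sq_le_sq₀ (norm_nonneg _) (norm_nonneg _) |>.1 <| by
    rw [norm_shift_I_sq hsym]; nlinarith [norm_nonneg (A u)]

theorem norm_apply_le_norm_shift_I (hsym : A.IsFormalAdjoint A) (u : A.domain) :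
    ‖A u‖ ≤ ‖A.shift Complex.I u‖ :=
  sq_le_sq₀ (norm_nonneg _) (norm_nonneg _) |>.1 <| by
    rw [norm_shift_I_sq hsym]; nlinarith [norm_nonneg (u : H)]

variable [CompleteSpace H]

theorem isClosed_range_shift_I (hsym : A.IsFormalAdjoint A) (hclosed : A.IsClosed) :
    _root_.IsClosed (LinearMap.range (A.shift Complex.I) : Set H) := by
  have : CompleteSpace A.graph := _root_.IsClosed.completeSpace_coe (hs := hclosed)
  let f : A.graph →L[ℂ] H :=
    (ContinuousLinearMap.snd ℂ H H - Complex.I • ContinuousLinearMap.fst ℂ H H).comp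
      A.graph.subtypeL
  have hf (u : A.domain) : f ⟨((u : H), A u), A.mem_graph u⟩ = A.shift Complex.I u := rfl
  have hrange : Set.range f = LinearMap.range (A.shift Complex.I) := by
    ext w
    constructor
    · rintro ⟨⟨g, hg⟩, rfl⟩
      obtain ⟨u, rfl⟩ := A.mem_graph_iff'.1 hg
      exact ⟨u, rfl⟩
    · rintro ⟨u, rfl⟩
      exact ⟨_, hf u⟩
  have hbound (g : A.graph) : ‖g‖ ≤ (1 : ℝ≥0) * ‖f g‖ := by
    obtain ⟨g, hg⟩ := g
    obtain ⟨u, rfl⟩ := A.mem_graph_iff'.1 hg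
    rw [NNReal.coe_one, one_mul, hf]
    exact max_le (norm_le_norm_shift_I hsym u) (norm_apply_le_norm_shift_I hsym u)
  rw [← hrange]
  exact (f.antilipschitz_of_bound hbound).isClosed_range f.uniformContinuous

open Complex in
theorem exists_eq_add_add_of_mem_adjoint_domain (hdense : Dense (A.domain : Set H))
    (hsym : A.IsFormalAdjoint A) (hclosed : A.IsClosed) {x : H} (hx : x ∈ A†.domain) :
    ∃ x₀ ∈ A.domain, ∃ xp ∈ A.defectSpace I, ∃ xm ∈ A.defectSpace (-I), x = x₀ + xp + xm := by
  have : CompleteSpace (LinearMap.range (A.shift I)) :=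
    (isClosed_range_shift_I hsym hclosed).completeSpace_coe
  obtain ⟨_, ⟨u, rfl⟩, w, hw, hdecomp⟩ :=
    (LinearMap.range (A.shift I)).exists_add_mem_mem_orthogonal (A†.shift I ⟨x, hx⟩)
  rw [orthogonal_range_shift hdense, conj_I] at hw
  have hwm : (I / 2) • w ∈ A.defectSpace (-I) := Submodule.smul_mem _ _ hw
  obtain ⟨hwdom, -⟩ := mem_defectSpace_iff.1 hwm
  let W : A†.domain := ⟨(I / 2) • w, hwdom⟩
  have hW : A†.shift I W = w := by
    rw [adjoint_shift_of_mem_defectSpace hwm, smul_smul]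
    convert one_smul ℂ w using 2
    linear_combination -I_sq
  let U : A†.domain := Submodule.inclusion (hsym.le_adjoint hdense).1 u
  have hxp : ((⟨x, hx⟩ - U - W : A†.domain) : H) ∈ A.defectSpace I := by
    rw [coe_mem_defectSpace_iff, LinearMap.map_sub, LinearMap.map_sub, hdecomp, hW,
      shift_apply_of_le (hsym.le_adjoint hdense)]
    abel
  refine ⟨u, u.2, _, hxp, _, hwm, ?_⟩
  simp only [Submodule.coe_sub, Submodule.coe_inclusion, U, W]
  abel

open Complex in
theorem eq_zero_of_add_add_eq_zero (hdense : Dense (A.domain : Set H))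
    (hsym : A.IsFormalAdjoint A)
    {a p m : H} (ha : a ∈ A.domain) (hp : p ∈ A.defectSpace I) (hm : m ∈ A.defectSpace (-I))
    (h : a + p + m = 0) : a = 0 ∧ p = 0 ∧ m = 0 := by
  have hle : A ≤ A† := hsym.le_adjoint hdense
  obtain ⟨hpdom, -⟩ := mem_defectSpace_iff.1 hp
  obtain ⟨hmdom, -⟩ := mem_defectSpace_iff.1 hm
  have hsum : Submodule.inclusion hle.1 ⟨a, ha⟩ + ⟨p, hpdom⟩ + ⟨m, hmdom⟩ = (0 : A†.domain) :=
    Subtype.ext h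
  have hshift : A.shift I ⟨a, ha⟩ = (2 * I) • m := by
    have := congrArg (A†.shift I) hsum
    rw [LinearMap.map_add, LinearMap.map_add, LinearMap.map_zero, shift_apply_of_le hle,
      adjoint_shift_of_mem_defectSpace hp, adjoint_shift_of_mem_defectSpace hm] at this
    linear_combination (norm := module) this
  have hshift₀ : A.shift I ⟨a, ha⟩ = 0 := by
    refine Submodule.disjoint_def.1 (Submodule.orthogonal_disjoint _) _
      (LinearMap.mem_range_self _ _) ?_
    rw [hshift, orthogonal_range_shift hdense, conj_I]
    exact Submodule.smul_mem _ _ hm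
  have ha₀ : a = 0 :=
    norm_le_zero_iff.1 (by simpa [hshift₀] using norm_le_norm_shift_I hsym ⟨a, ha⟩)
  have hm₀ : m = 0 := by
    rw [hshift₀, eq_comm, smul_eq_zero] at hshift
    exact hshift.resolve_left (by simp)
  refine ⟨ha₀, ?_, hm₀⟩
  rwa [ha₀, hm₀, zero_add, add_zero] at h

end LinearPMap

/-- Von Neumann's formula: if `A` is a densely defined, symmetric, closed unbounded
operator on a complex Hilbert space `H`, then every `x` in the domain of the adjoint
`A*` can be written uniquely as `x = x₀ + x₊ + x₋`, where `x₀ ∈ dom A`,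
`x₊ ∈ dom A*` with `A* x₊ = i x₊`, and `x₋ ∈ dom A*` with `A* x₋ = −i x₋`. -/
theorem vonNeumann_formula
    {H : Type*} [NormedAddCommGroup H] [InnerProductSpace ℂ H] [CompleteSpace H]
    (A : H →ₗ.[ℂ] H) (hdense : Dense (A.domain : Set H))
    (hsym : ∀ x y : A.domain, ⟪A x, (y : H)⟫_ℂ = ⟪(x : H), A y⟫_ℂ)
    (hclosed : IsClosed (A.graph : Set (H × H)))
    (x : H) (hx : x ∈ A.adjoint.domain) :
    ∃! d : H × H × H,
      d.1 ∈ A.domain ∧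
        (∃ h : d.2.1 ∈ A.adjoint.domain, A.adjoint ⟨d.2.1, h⟩ = Complex.I • d.2.1) ∧
        (∃ h : d.2.2 ∈ A.adjoint.domain, A.adjoint ⟨d.2.2, h⟩ = (-Complex.I) • d.2.2) ∧
        x = d.1 + d.2.1 + d.2.2 := by
  simp only [← mem_defectSpace_iff]
  obtain ⟨x₀, h₀, xp, hp, xm, hm, rfl⟩ :=
    exists_eq_add_add_of_mem_adjoint_domain hdense hsym hclosed hx
  refine ⟨(x₀, xp, xm), ⟨h₀, hp, hm, rfl⟩, ?_⟩
  rintro ⟨a, b, c⟩ ⟨ha, hb, hc, hsum⟩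
  dsimp only at ha hb hc hsum
  obtain ⟨h₀', hp', hm'⟩ := eq_zero_of_add_add_eq_zero hdense hsym (sub_mem ha h₀)
    (sub_mem hb hp) (sub_mem hc hm) (by linear_combination (norm := module) hsum.symm)
  rw [sub_eq_zero] at h₀' hp' hm'
  rw [h₀', hp', hm']
end
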